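/- arXiv:1101.3382 — 2 statements merged into one kernel-verified Lean document; each statement's English description precedes it below -/
import Mathlib

section
/- With the F5-style partial order (F5-divisibility via module orderings in POT fashion): if t(u, f), with (u,f) ∈ G, lpp(u) = x^α e_i, f ≠ 0, is F5-divisible by some (u', f') ∈ G with lpp(u') = x^β e_j (i.e., lpp(f') divides t x^α and e_i ≻ e_j), and if the syzygy (f' e_i − f_i u', 0) belongs to G, then t(u, f) is gen-rewritable by G under the partial order in which any pair with zero polynomial part is smaller than any pair with nonzero polynomial part. -/
open MvPolynomial

noncomputable section

/-- Power products (exponent vectors). -/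
abbrev PP (n : ℕ) := Fin n →₀ ℕ

/-- Signatures: module monomials `x^α eᵢ` of `R^m`. -/
abbrev Sig (n m : ℕ) := Fin m × PP n

variable {K : Type*} [Field K] {n m : ℕ}

/-- Leading power product of a polynomial w.r.t. a monomial order (`lpp 0 = 0`). -/
def lpp (m₁ : MonomialOrder (Fin n)) (f : MvPolynomial (Fin n) K) : PP n :=
  m₁.toSyn.symm (f.support.sup m₁.toSyn)

/-- Leading power product, valued in `WithBot m₁.syn` so that `lppW 0 = ⊥`. -/
def lppW (m₁ : MonomialOrder (Fin n)) (f : MvPolynomial (Fin n) K) : WithBot m₁.syn :=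
  f.support.sup (fun d => ((m₁.toSyn d : m₁.syn) : WithBot m₁.syn))

/-- Leading coefficient. -/
def lc (m₁ : MonomialOrder (Fin n)) (f : MvPolynomial (Fin n) K) : K :=
  MvPolynomial.coeff (lpp m₁ f) f

/-- Multiplication of a module element by a power product `t`. -/
def smulMon (t : PP n) (u : Fin m → MvPolynomial (Fin n) K) :
    Fin m → MvPolynomial (Fin n) K :=
  fun i => (MvPolynomial.monomial t (1 : K)) * u i

/-- The set of module monomials occurring in a vector. -/
def sigSupport (u : Fin m → MvPolynomial (Fin n) K) : Finset (Sig n m) :=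
  Finset.univ.biUnion (fun i => (u i).support.image (fun α => ((i, α) : Sig n m)))

/-- Signature (leading module monomial) of a vector w.r.t. a term order `lo` on `R^m`;
`sig 0 = ⊥`. -/
def sig (lo : LinearOrder (Sig n m)) (u : Fin m → MvPolynomial (Fin n) K) :
    WithBot (Sig n m) :=
  @Finset.max _ lo (sigSupport u)

/-- Comparison of (possibly bottom) signatures. -/
def sigLE (lo : LinearOrder (Sig n m)) (a b : WithBot (Sig n m)) : Prop :=
  letI := lo; a ≤ b

def sigLT (lo : LinearOrder (Sig n m)) (a b : WithBot (Sig n m)) : Prop :=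
  letI := lo; a < b

/-- The leading coefficient of a vector. -/
def vlc (lo : LinearOrder (Sig n m)) (u : Fin m → MvPolynomial (Fin n) K) : K :=
  WithBot.recBotCoe 0 (fun p : Sig n m => MvPolynomial.coeff p.2 (u p.1)) (sig lo u)

/-- Divisibility of module monomials: same component and smaller exponent. -/
def sigDvd (a b : WithBot (Sig n m)) : Prop :=
  ∃ (i : Fin m) (α β : PP n),
    a = ((⟨i, α⟩ : Sig n m) : WithBot (Sig n m)) ∧
    b = ((⟨i, β⟩ : Sig n m) : WithBot (Sig n m)) ∧ α ≤ β

/-- The module `M = {(u,f) : u ⬝ (f₁,…,f_m) = f}`. -/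
def Mset (F : Fin m → MvPolynomial (Fin n) K) :
    Set ((Fin m → MvPolynomial (Fin n) K) × MvPolynomial (Fin n) K) :=
  {p | (∑ i, p.1 i * F i) = p.2}

/-- `(u,f)` has a standard representation w.r.t. `B`. -/
def StdRep (m₁ : MonomialOrder (Fin n)) (lo : LinearOrder (Sig n m))
    (B : Set ((Fin m → MvPolynomial (Fin n) K) × MvPolynomial (Fin n) K))
    (uf : (Fin m → MvPolynomial (Fin n) K) × MvPolynomial (Fin n) K) : Prop :=
  ∃ (s : ℕ) (p : Fin s → MvPolynomial (Fin n) K)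
    (vg : Fin s → (Fin m → MvPolynomial (Fin n) K) × MvPolynomial (Fin n) K),
    (∀ i, vg i ∈ B) ∧ uf.1 = ∑ i, p i • (vg i).1 ∧ uf.2 = ∑ i, p i * (vg i).2 ∧
    (∀ i, sigLE lo (sig lo (p i • (vg i).1)) (sig lo uf.1)) ∧
    (∀ i, lppW m₁ (p i * (vg i).2) ≤ lppW m₁ uf.2)

/-- `G` is an S-Gröbner basis for `Mset F`. -/
def SGBasis (m₁ : MonomialOrder (Fin n)) (lo : LinearOrder (Sig n m))
    (F : Fin m → MvPolynomial (Fin n) K)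
    (G : Set ((Fin m → MvPolynomial (Fin n) K) × MvPolynomial (Fin n) K)) : Prop :=
  ∀ uf ∈ Mset F, uf.2 ≠ 0 → ∃ vg ∈ G, vg.2 ≠ 0 ∧ lpp m₁ vg.2 ≤ lpp m₁ uf.2 ∧
    sigLE lo (sig lo (smulMon (lpp m₁ uf.2 - lpp m₁ vg.2) vg.1)) (sig lo uf.1)

/-- `t·(u,f)` is generalized rewritable by `B` w.r.t. a partial order `lt`. -/
def GenRew (lo : LinearOrder (Sig n m))
    (lt : ((Fin m → MvPolynomial (Fin n) K) × MvPolynomial (Fin n) K) →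
          ((Fin m → MvPolynomial (Fin n) K) × MvPolynomial (Fin n) K) → Prop)
    (B : Set ((Fin m → MvPolynomial (Fin n) K) × MvPolynomial (Fin n) K))
    (t : PP n) (p : (Fin m → MvPolynomial (Fin n) K) × MvPolynomial (Fin n) K) : Prop :=
  ∃ q ∈ B, lt q p ∧ sigDvd (sig lo q.1) (sig lo (smulMon t p.1))

end

/-! Under POT with `eᵢ ≻ eⱼ`, every component of `u'` lies at an index `≥ j > i`, so the
syzygy `f' eᵢ − fᵢ u'` has `f'` as its `i`-th component and nothing at earlier indices: its
signature is `lpp(f') eᵢ`, which divides `t x^α eᵢ = sig(t u)`. Being a syzygy, it is smaller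
than `(u, f)` in the partial order because `f ≠ 0`. -/

theorem Finset.max_eq_coe_iff {α : Type*} [LinearOrder α] {s : Finset α} {a : α} :
    s.max = a ↔ a ∈ s ∧ ∀ b ∈ s, b ≤ a := by
  refine ⟨fun h => ⟨mem_of_max h, fun b hb => le_max_of_eq hb h⟩, ?_⟩
  rintro ⟨ha, hmax⟩
  exact le_antisymm (Finset.max_le fun b hb => WithBot.coe_le_coe.mpr (hmax b hb)) (le_max ha)

section Signature

variable {K : Type*} [Field K] {n m : ℕ}

lemma lpp_eq_degree (m₁ : MonomialOrder (Fin n)) (f : MvPolynomial (Fin n) K) :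
    lpp m₁ f = m₁.degree f :=
  rfl

lemma mem_sigSupport_iff {u : Fin m → MvPolynomial (Fin n) K} {k : Fin m} {γ : PP n} :
    ((k, γ) : Sig n m) ∈ sigSupport u ↔ γ ∈ (u k).support := by
  simp [sigSupport]

lemma sig_eq_coe_iff (lo : LinearOrder (Sig n m)) {u : Fin m → MvPolynomial (Fin n) K}
    {a : Sig n m} :
    sig lo u = a ↔ a ∈ sigSupport u ∧ ∀ b ∈ sigSupport u, lo.le b a :=
  @Finset.max_eq_coe_iff _ lo _ _

end Signature

/-- `lo` is the position-over-term extension of `m₁` with `e₀ ≻ e₁ ≻ ⋯`. -/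
def IsPOT {n m : ℕ} (m₁ : MonomialOrder (Fin n)) (lo : LinearOrder (Sig n m)) : Prop :=
  ∀ p q : Sig n m, lo.lt p q ↔ (q.1 < p.1 ∨ (p.1 = q.1 ∧ m₁.toSyn p.2 < m₁.toSyn q.2))

namespace IsPOT

variable {K : Type*} [Field K] {n m : ℕ} {m₁ : MonomialOrder (Fin n)}
  {lo : LinearOrder (Sig n m)}

lemma le_iff (hlo : IsPOT m₁ lo) (p q : Sig n m) :
    lo.le p q ↔ q.1 ≤ p.1 ∧ (p.1 = q.1 → m₁.toSyn p.2 ≤ m₁.toSyn q.2) := by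
  rw [← @not_lt _ lo, hlo]
  grind

lemma le_component_of_ne_zero (hlo : IsPOT m₁ lo) {u : Fin m → MvPolynomial (Fin n) K}
    {j : Fin m} {β : PP n} (hu : sig lo u = ((j, β) : Sig n m)) {k : Fin m} (hk : u k ≠ 0) :
    j ≤ k := by
  obtain ⟨δ, hδ⟩ := MvPolynomial.support_nonempty.mpr hk
  exact ((hlo.le_iff _ _).mp (((sig_eq_coe_iff lo).mp hu).2 _ (mem_sigSupport_iff.mpr hδ))).1

lemma sig_smulMon (hlo : IsPOT m₁ lo) {u : Fin m → MvPolynomial (Fin n) K} {i : Fin m}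
    {α : PP n} (hu : sig lo u = ((i, α) : Sig n m)) (t : PP n) :
    sig lo (smulMon t u) = ((i, t + α) : Sig n m) := by
  obtain ⟨hα, hmax⟩ := (sig_eq_coe_iff lo).mp hu
  refine (sig_eq_coe_iff lo).mpr ⟨?_, ?_⟩
  · rw [mem_sigSupport_iff, MvPolynomial.mem_support_iff, smulMon,
      MvPolynomial.coeff_monomial_mul, one_mul]
    exact MvPolynomial.mem_support_iff.mp (mem_sigSupport_iff.mp hα)
  · rintro ⟨k, γ⟩ hγ
    rw [mem_sigSupport_iff, MvPolynomial.mem_support_iff, smulMon,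
      MvPolynomial.coeff_monomial_mul'] at hγ
    split_ifs at hγ with htγ
    · have hle := (hlo.le_iff _ _).mp
        (hmax (k, γ - t) (mem_sigSupport_iff.mpr (MvPolynomial.mem_support_iff.mpr
          (right_ne_zero_of_mul hγ))))
      refine (hlo.le_iff _ _).mpr ⟨hle.1, fun hki => ?_⟩
      rw [← add_tsub_cancel_of_le htγ, map_add, map_add]
      exact add_le_add le_rfl (hle.2 hki)
    · exact absurd rfl hγ

lemma sig_single_sub_smul (hlo : IsPOT m₁ lo) {f : MvPolynomial (Fin n) K} (hf : f ≠ 0)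
    {u : Fin m → MvPolynomial (Fin n) K} {i j : Fin m} {β : PP n}
    (hu : sig lo u = ((j, β) : Sig n m)) (hij : i < j) (g : MvPolynomial (Fin n) K) :
    sig lo (f • (Pi.single i 1 : Fin m → MvPolynomial (Fin n) K) - g • u) =
      ((i, lpp m₁ f) : Sig n m) := by
  have hui : u i = 0 := by_contra fun h => (hlo.le_component_of_ne_zero hu h).not_gt hij
  have hwi : (f • (Pi.single i 1 : Fin m → MvPolynomial (Fin n) K) - g • u) i = f := by
    simp [hui]
  refine (sig_eq_coe_iff lo).mpr ⟨?_, ?_⟩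
  · rw [mem_sigSupport_iff, hwi, lpp_eq_degree]
    exact m₁.degree_mem_support hf
  · rintro ⟨k, γ⟩ hγ
    rw [mem_sigSupport_iff] at hγ
    refine (hlo.le_iff _ _).mpr ?_
    by_cases hki : k = i
    · subst hki
      rw [hwi] at hγ
      exact ⟨le_rfl, fun _ => m₁.le_degree hγ⟩
    · have huk : u k ≠ 0 := by
        rintro huk
        simp [Pi.single_eq_of_ne hki, huk] at hγ
      exact ⟨(hij.trans_le (hlo.le_component_of_ne_zero hu huk)).le, fun h => absurd h hki⟩

end IsPOT

theorem stmt11_general {K : Type*} [Field K] {n m : ℕ}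
    (m₁ : MonomialOrder (Fin n)) (lo : LinearOrder (Sig n m))
    (hPOT : ∀ p q : Sig n m, lo.lt p q ↔
      (q.1 < p.1 ∨ (p.1 = q.1 ∧ m₁.toSyn p.2 < m₁.toSyn q.2)))
    (F : Fin m → MvPolynomial (Fin n) K)
    (G : Set ((Fin m → MvPolynomial (Fin n) K) × MvPolynomial (Fin n) K))
    (u : Fin m → MvPolynomial (Fin n) K) (f : MvPolynomial (Fin n) K)
    (hf : f ≠ 0) (i : Fin m) (α : PP n)
    (hsigu : sig lo u = ((⟨i, α⟩ : Sig n m) : WithBot (Sig n m)))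
    (u' : Fin m → MvPolynomial (Fin n) K) (f' : MvPolynomial (Fin n) K)
    (hf' : f' ≠ 0) (j : Fin m) (β : PP n)
    (hsigu' : sig lo u' = ((⟨j, β⟩ : Sig n m) : WithBot (Sig n m)))
    (hij : i < j) (t : PP n) (hdvd : lpp m₁ f' ≤ t + α)
    (hsyz : ((f' • (Pi.single i (1 : MvPolynomial (Fin n) K) :
                Fin m → MvPolynomial (Fin n) K) - F i • u',
              (0 : MvPolynomial (Fin n) K)) ∈ G)) :
    GenRew lo (fun p q => p.2 = 0 ∧ q.2 ≠ 0) G t (u, f) :=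
  ⟨_, hsyz, ⟨rfl, hf⟩, i, lpp m₁ f', t + α,
    IsPOT.sig_single_sub_smul hPOT hf' hsigu' hij (F i),
    IsPOT.sig_smulMon hPOT hsigu t, hdvd⟩

/-- with `≺₂` the POT extension of `≺₁` (`e₁ ≻ … ≻ e_m`), if `t(u,f)`
(with `lpp u = x^α eᵢ`, `f ≠ 0`) is F5-divisible by `(u',f') ∈ G` with
`lpp u' = x^β eⱼ` (`lpp f' ∣ t x^α`, `eᵢ ≻ eⱼ`), and the syzygy `(f' eᵢ − fᵢ u', 0)`
belongs to `G`, then `t(u,f)` is gen-rewritable by `G` for the partial order in which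
any pair with zero polynomial part is smaller than any pair with nonzero part. -/
theorem stmt11 {K : Type*} [Field K] {n m : ℕ}
    (m₁ : MonomialOrder (Fin n)) (lo : LinearOrder (Sig n m))
    (hPOT : ∀ p q : Sig n m, lo.lt p q ↔
      (q.1 < p.1 ∨ (p.1 = q.1 ∧ m₁.toSyn p.2 < m₁.toSyn q.2)))
    (F : Fin m → MvPolynomial (Fin n) K)
    (G : Set ((Fin m → MvPolynomial (Fin n) K) × MvPolynomial (Fin n) K))
    (hGM : G ⊆ Mset F)
    (u : Fin m → MvPolynomial (Fin n) K) (f : MvPolynomial (Fin n) K)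
    (huf : (u, f) ∈ G) (hf : f ≠ 0) (i : Fin m) (α : PP n)
    (hsigu : sig lo u = ((⟨i, α⟩ : Sig n m) : WithBot (Sig n m)))
    (u' : Fin m → MvPolynomial (Fin n) K) (f' : MvPolynomial (Fin n) K)
    (hu'f' : (u', f') ∈ G) (hf' : f' ≠ 0) (j : Fin m) (β : PP n)
    (hsigu' : sig lo u' = ((⟨j, β⟩ : Sig n m) : WithBot (Sig n m)))
    (hij : i < j) (t : PP n) (hdvd : lpp m₁ f' ≤ t + α)
    (hsyz : ((f' • (Pi.single i (1 : MvPolynomial (Fin n) K) :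
                Fin m → MvPolynomial (Fin n) K) - F i • u',
              (0 : MvPolynomial (Fin n) K)) ∈ G)) :
    GenRew lo (fun p q => p.2 = 0 ∧ q.2 ≠ 0) G t (u, f) :=
  stmt11_general m₁ lo hPOT F G u f hf i α hsigu u' f' hf' j β hsigu' hij t hdvd hsyz
end

section
/- The relation < on a finite indexed family B of pairs (u_i, f_i) ∈ R^m × R defined by: (u_j, f_j) < (u_i, f_i) iff, setting t' = lcm(lpp(u_i), lpp(u_j))/lpp(u_j) and t = lcm(lpp(u_i), lpp(u_j))/lpp(u_i) (so that lpp(t' u_j) = lpp(t u_i)), either lpp(t' f_j) ≺ lpp(t f_i), or (lpp(t' f_j) = lpp(t f_i) and j > i), is a strict partial order (irreflexive and transitive), provided that all lpp(u_i) lie in the same module component so the lcm is well-defined. -/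
open MvPolynomial

/-!
Multiplying a polynomial by a power product `x^s` shifts its leading power product by `s`, a
strictly monotone map. Hence the comparison of `lpp(t' f_j)` with `lpp(t f_i)` made at
`lcm(x^{α_i}, x^{α_j})` is unchanged when both sides are lifted to any common multiple `x^γ`.
Lifting all three pairs of a transitivity chain to the lcm of the three exponents, the relation
becomes the lexicographic order on the keys `(lpp(x^{γ - α_i} f_i), i reversed)`, which is a
strict order.
-/

theorem MvPolynomial.support_monomial_one_mul {σ R : Type*} [CommSemiring R]
    (s : σ →₀ ℕ) (p : MvPolynomial σ R) :
    (monomial s (1 : R) * p).support = p.support.map (addLeftEmbedding s) :=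
  AddMonoidAlgebra.support_coeff_single_mul p _ (by simp) s

section GVWOrder

variable {K : Type*} [Field K] {n : ℕ} (m₁ : MonomialOrder (Fin n))

theorem lppW_monomial_one_mul (s : PP n) (f : MvPolynomial (Fin n) K) :
    lppW m₁ (monomial s (1 : K) * f) = (lppW m₁ f).map (m₁.toSyn s + ·) := by
  have hmono : StrictMono (m₁.toSyn s + ·) := fun _ _ h => add_lt_add_right h _
  rw [lppW, lppW, support_monomial_one_mul, Finset.sup_map,
    Finset.apply_sup_eq_sup_comp_of_linearOrder _ hmono.withBot_map.monotone (WithBot.map_bot _)]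
  refine Finset.sup_congr rfl fun d _ => ?_
  simp [map_add]

theorem lppW_monomial_tsub_mul_of_le {γ σ t : PP n} (hσ : σ ≤ γ) (ht : t ≤ σ)
    (f : MvPolynomial (Fin n) K) :
    lppW m₁ (monomial (γ - t) (1 : K) * f) =
      (lppW m₁ (monomial (σ - t) (1 : K) * f)).map (m₁.toSyn (γ - σ) + ·) := by
  have hsplit : monomial (γ - σ + (σ - t)) (1 : K) = monomial (γ - σ) 1 * monomial (σ - t) 1 := by
    rw [monomial_mul, one_mul]
  rw [← tsub_add_tsub_cancel hσ ht, hsplit, mul_assoc, lppW_monomial_one_mul]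

variable {ι : Type*} [LinearOrder ι] (α : ι → PP n) (f : ι → MvPolynomial (Fin n) K)

def gvwLT (j i : ι) : Prop :=
  lppW m₁ (monomial ((α i ⊔ α j) - α j) (1 : K) * f j)
      < lppW m₁ (monomial ((α i ⊔ α j) - α i) (1 : K) * f i)
    ∨ (lppW m₁ (monomial ((α i ⊔ α j) - α j) (1 : K) * f j)
        = lppW m₁ (monomial ((α i ⊔ α j) - α i) (1 : K) * f i) ∧ i < j)

noncomputable def gvwKey (γ : PP n) (i : ι) : WithBot m₁.syn ×ₗ ιᵒᵈ :=
  toLex (lppW m₁ (monomial (γ - α i) (1 : K) * f i), OrderDual.toDual i)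

theorem gvwLT_iff_gvwKey_lt {γ : PP n} {i j : ι} (hγ : α i ⊔ α j ≤ γ) :
    gvwLT m₁ α f j i ↔ gvwKey m₁ α f γ j < gvwKey m₁ α f γ i := by
  have hshift : StrictMono (WithBot.map (m₁.toSyn (γ - (α i ⊔ α j)) + ·)) :=
    StrictMono.withBot_map fun _ _ h => add_lt_add_right h _
  rw [gvwKey, gvwKey, Prod.Lex.toLex_lt_toLex, OrderDual.toDual_lt_toDual,
    lppW_monomial_tsub_mul_of_le m₁ hγ le_sup_left,
    lppW_monomial_tsub_mul_of_le m₁ hγ le_sup_right, hshift.lt_iff_lt, hshift.injective.eq_iff]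
  rfl

theorem isStrictOrder_gvwLT : IsStrictOrder ι (gvwLT m₁ α f) where
  irrefl i := by
    rw [gvwLT_iff_gvwKey_lt m₁ α f (sup_idem (α i)).le]
    exact lt_irrefl _
  trans l j i hlj hji := by
    have hjl : α j ⊔ α l ≤ α i ⊔ α j ⊔ α l := sup_le_sup_right le_sup_right _
    have hij : α i ⊔ α j ≤ α i ⊔ α j ⊔ α l := le_sup_left
    have hil : α i ⊔ α l ≤ α i ⊔ α j ⊔ α l := sup_le_sup_right le_sup_left _
    rw [gvwLT_iff_gvwKey_lt m₁ α f hjl] at hlj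
    rw [gvwLT_iff_gvwKey_lt m₁ α f hij] at hji
    exact (gvwLT_iff_gvwKey_lt m₁ α f hil).2 (hlj.trans hji)

end GVWOrder

theorem stmt17_general {K : Type*} [Field K] {n m : ℕ}
    (m₁ : MonomialOrder (Fin n)) (N : ℕ)
    (b : Fin N → (Fin m → MvPolynomial (Fin n) K) × MvPolynomial (Fin n) K)
    (α : Fin N → PP n) :
    let rel : Fin N → Fin N → Prop := fun j i =>
      lppW m₁ ((MvPolynomial.monomial ((α i ⊔ α j) - α j) (1 : K)) * (b j).2)
          < lppW m₁ ((MvPolynomial.monomial ((α i ⊔ α j) - α i) (1 : K)) * (b i).2)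
        ∨ (lppW m₁ ((MvPolynomial.monomial ((α i ⊔ α j) - α j) (1 : K)) * (b j).2)
            = lppW m₁ ((MvPolynomial.monomial ((α i ⊔ α j) - α i) (1 : K)) * (b i).2)
           ∧ i < j)
    (∀ i, ¬ rel i i) ∧ (∀ i j l, rel l j → rel j i → rel l i) := by
  intro rel
  have : IsStrictOrder (Fin N) rel := isStrictOrder_gvwLT m₁ α fun i => (b i).2
  exact ⟨irrefl_of rel, fun _ _ _ => trans_of rel⟩

/-- the GVW-style relation on an injectively indexed family
`(u₁,f₁),…,(u_N,f_N)` with all `lpp uᵢ = x^{αᵢ} e_k` in the same component: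
`(u_j,f_j) < (u_i,f_i)` iff `lpp(t' f_j) ≺ lpp(t f_i)`, or
(`lpp(t' f_j) = lpp(t f_i)` and `j > i`), where
`t' = lcm(lpp uᵢ, lpp u_j)/lpp u_j` and `t = lcm(lpp uᵢ, lpp u_j)/lpp uᵢ`,
is a strict partial order (irreflexive and transitive). -/
theorem stmt17 {K : Type*} [Field K] {n m : ℕ}
    (m₁ : MonomialOrder (Fin n)) (lo : LinearOrder (Sig n m)) (N : ℕ)
    (b : Fin N → (Fin m → MvPolynomial (Fin n) K) × MvPolynomial (Fin n) K)
    (hinj : Function.Injective b) (k : Fin m) (α : Fin N → PP n)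
    (hsig : ∀ i, sig lo (b i).1 = ((⟨k, α i⟩ : Sig n m) : WithBot (Sig n m))) :
    let rel : Fin N → Fin N → Prop := fun j i =>
      lppW m₁ ((MvPolynomial.monomial ((α i ⊔ α j) - α j) (1 : K)) * (b j).2)
          < lppW m₁ ((MvPolynomial.monomial ((α i ⊔ α j) - α i) (1 : K)) * (b i).2)
        ∨ (lppW m₁ ((MvPolynomial.monomial ((α i ⊔ α j) - α j) (1 : K)) * (b j).2)
            = lppW m₁ ((MvPolynomial.monomial ((α i ⊔ α j) - α i) (1 : K)) * (b i).2)
           ∧ i < j)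
    (∀ i, ¬ rel i i) ∧ (∀ i j l, rel l j → rel j i → rel l i) :=
  stmt17_general m₁ N b α
end
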